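/- The problem of finding a maximum likelihood conjunctive discriminant is NP-hard: the minimum-weight monotone SAT problem reduces in polynomial time to it. Specifically, given a monotone CNF formula φ = C_1 ∧ ... ∧ C_n over variables x_1,...,x_m and ε ∈ (0, 1/2), construct the trace-set discrimination instance P_φ with one predicate p_i per variable; one trace per clause C_j whose valuation makes p_i true iff x_i does not occur in C_j, with label distribution (d(ℓ_1), d(ℓ_2)) = (0, 1); and one trace per variable x_i whose valuation makes exactly p_i false, with label distribution (1−ε, ε). Then φ has a satisfying assignment setting exactly k variables to true if and only if P_φ has a conjunctive discriminant of likelihood ε^k · (1−ε)^(m−k). -/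

import Mathlib

/-!
A set `A` of true variables makes the clause factor of the likelihood `1` if it satisfies
every clause and `0` otherwise, while the variable traces contribute
`ε ^ #A * (1 - ε) ^ (m - #A)`.
Since `ε < 1 - ε`, this value is strictly decreasing in `#A`, so it determines `#A = k`.
-/

open Finset

theorem Finset.prod_ite_notMem_univ {α M : Type*} [Fintype α] [DecidableEq α] [CommMonoid M]
    (A : Finset α) (a b : M) :
    ∏ i, (if i ∉ A then a else b) = b ^ #A * a ^ (Fintype.card α - #A) := by
  simp only [prod_ite, prod_const, not_not, filter_not, filter_mem_eq_inter, univ_inter,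
    ← compl_eq_univ_sdiff, card_compl, mul_comm]

theorem prod_ite_forall_notMem_eq_ite {ι α M₀ : Type*} [Fintype ι]
    [CommMonoidWithZero M₀] (C : ι → Finset α) (A : Finset α)
    [DecidablePred fun j ↦ ∀ i ∈ A, i ∉ C j] [Decidable (∀ j, ∃ i ∈ C j, i ∈ A)] :
    ∏ j, (if ∀ i ∈ A, i ∉ C j then (0 : M₀) else 1) =
      if ∀ j, ∃ i ∈ C j, i ∈ A then 1 else 0 := by
  simp only [← ite_not (p := ∀ i ∈ A, _), Fintype.prod_boole]
  exact if_congr (by simp only [not_forall, not_not, exists_prop, and_comm]) rfl rfl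

theorem pow_mul_pow_sub_strictAnti {ε : ℝ} (hε : 0 < ε) (hε' : ε < 1 - ε) (m : ℕ) :
    StrictAnti fun k ↦ ε ^ k * (1 - ε) ^ (m - k) := by
  refine strictAnti_nat_of_succ_lt fun k ↦ ?_
  rcases lt_or_ge k m with hkm | hmk
  · have hsub : m - k = m - (k + 1) + 1 := by omega
    have hpos : 0 < ε ^ k * (1 - ε) ^ (m - (k + 1)) :=
      mul_pos (pow_pos hε k) (pow_pos (hε.trans hε') _)
    calc ε ^ (k + 1) * (1 - ε) ^ (m - (k + 1)) = ε ^ k * (1 - ε) ^ (m - (k + 1)) * ε := by ring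
      _ < ε ^ k * (1 - ε) ^ (m - (k + 1)) * (1 - ε) := mul_lt_mul_of_pos_left hε' hpos
      _ = ε ^ k * (1 - ε) ^ (m - k) := by rw [hsub, pow_succ]; ring
  · simp only [Nat.sub_eq_zero_of_le hmk, Nat.sub_eq_zero_of_le (hmk.trans k.le_succ), pow_zero,
      mul_one]
    exact pow_lt_pow_right_of_lt_one₀ hε (by linarith) k.lt_succ_self

/-- NP-hardness reduction from minimum-weight monotone SAT: the monotone CNF φ with
clauses C_1,...,C_n has a satisfying assignment setting exactly k variables to true
iff the constructed trace-set discrimination instance has a conjunctive discriminant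
of likelihood ε^k · (1-ε)^(m-k). -/
theorem stmt_8 (n m k : ℕ) (C : Fin n → Finset (Fin m)) (ε : ℝ)
    (hε0 : 0 < ε) (hε1 : ε < 1 / 2)
    (lik : Finset (Fin m) → ℝ)
    (hlik : ∀ A, lik A =
      (∏ j : Fin n, if ∀ i ∈ A, i ∉ C j then (0 : ℝ) else 1) *
        (∏ i : Fin m, if i ∉ A then 1 - ε else ε)) :
    (∃ A : Finset (Fin m), A.card = k ∧ ∀ j, ∃ i ∈ C j, i ∈ A) ↔
      (∃ A : Finset (Fin m), lik A = ε ^ k * (1 - ε) ^ (m - k)) := by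
  have hε : ε < 1 - ε := by linarith
  have hlik' : ∀ A, lik A =
      (if ∀ j, ∃ i ∈ C j, i ∈ A then 1 else 0) * (ε ^ #A * (1 - ε) ^ (m - #A)) := by
    intro A
    rw [hlik, prod_ite_forall_notMem_eq_ite, prod_ite_notMem_univ, Fintype.card_fin]
  constructor
  · rintro ⟨A, rfl, hsat⟩
    exact ⟨A, by rw [hlik', if_pos hsat, one_mul]⟩
  · rintro ⟨A, hA⟩
    rw [hlik'] at hA
    split_ifs at hA with hsat
    · rw [one_mul] at hA
      exact ⟨A, (pow_mul_pow_sub_strictAnti hε0 hε m).injective hA, hsat⟩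
    · rw [zero_mul] at hA
      exact absurd hA.symm <|
        mul_ne_zero (pow_ne_zero _ hε0.ne') (pow_ne_zero _ (hε0.trans hε).ne')
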